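/- arXiv:2212.07474 — 7 statements merged into one kernel-verified Lean document; each statement's English description precedes it below -/
import Mathlib

section
/- Let n ≥ 2 be an integer and u : [a,b] → ℝ be (n+1)-times continuously differentiable with (-1)^k u^(k)(x) ≤ 0 on [a,b] for all k = 1,…,n+1, and u^(k)(b) = 0 for all k = 1,…,n-1. Then (n-1)·u'(x) + u''(x)·(b-x) ≤ 0 for all x in [a,b]. -/
/-!
Put `G_j(x) = (n - j) u⁽ʲ⁾(x) + u⁽ʲ⁺¹⁾(x) (b - x)` (`derivComb u n j b x`) for `1 ≤ j ≤ n`,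
so that the claim is `G_1 ≤ 0`. Differentiating gives `G_j' = G_{j+1}`, while `G_n = u⁽ⁿ⁺¹⁾ (b - x)` has the sign
of `u⁽ⁿ⁺¹⁾` and `G_j(b) = 0` for `j < n`. Descending from `j = n`, the sign of `G_{j+1}` makes
`(-1)^(j+1) G_j` nondecreasing on `[a, b]`, hence nonpositive, since it vanishes at `b`.
-/

open Set

noncomputable def derivComb (u : ℝ → ℝ) (n j : ℕ) (b x : ℝ) : ℝ :=
  ((n : ℝ) - j) * iteratedDeriv j u x + iteratedDeriv (j + 1) u x * (b - x)

lemma hasDerivAt_mul_add_mul_sub {f f' f'' : ℝ → ℝ} {y : ℝ} (c b : ℝ)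
    (hf : HasDerivAt f (f' y) y) (hf' : HasDerivAt f' (f'' y) y) :
    HasDerivAt (fun z => c * f z + f' z * (b - z)) ((c - 1) * f' y + f'' y * (b - y)) y :=
  ((hf.const_mul c).add (hf'.mul ((hasDerivAt_id' y).const_sub b))).congr_deriv (by ring)

lemma ContDiff.hasDerivAt_iteratedDeriv {u : ℝ → ℝ} {n m : ℕ} (hu : ContDiff ℝ (n + 1) u)
    (hm : m ≤ n) (y : ℝ) : HasDerivAt (iteratedDeriv m u) (iteratedDeriv (m + 1) u y) y := by
  rw [iteratedDeriv_succ]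
  exact (hu.differentiable_iteratedDeriv m (by exact_mod_cast Nat.lt_succ_of_le hm) y).hasDerivAt

section

variable {n : ℕ} {a b : ℝ} {u : ℝ → ℝ}

lemma hasDerivAt_derivComb (hu : ContDiff ℝ (n + 1) u) {j : ℕ} (hj : j < n) (x : ℝ) :
    HasDerivAt (derivComb u n j b) (derivComb u n (j + 1) b x) x := by
  refine (hasDerivAt_mul_add_mul_sub ((n : ℝ) - j) b (hu.hasDerivAt_iteratedDeriv hj.le x)
    (hu.hasDerivAt_iteratedDeriv hj x)).congr_deriv ?_
  rw [derivComb]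
  push_cast
  ring

lemma derivComb_self (x : ℝ) : derivComb u n n b x = iteratedDeriv (n + 1) u x * (b - x) := by
  simp [derivComb]

lemma derivComb_right (j : ℕ) :
    derivComb u n j b b = ((n : ℝ) - j) * iteratedDeriv j u b := by
  simp [derivComb]

lemma neg_one_pow_mul_derivComb_nonpos (hu : ContDiff ℝ (n + 1) u)
    (hsign : ∀ x ∈ Icc a b, (-1 : ℝ) ^ (n + 1) * iteratedDeriv (n + 1) u x ≤ 0)
    (hvanish : ∀ k, 1 ≤ k → k < n → iteratedDeriv k u b = 0) {j : ℕ} (hj : 1 ≤ j)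
    (hjn : j ≤ n) : ∀ x ∈ Icc a b, (-1 : ℝ) ^ (j + 1) * derivComb u n j b x ≤ 0 := by
  refine Nat.decreasingInduction' (fun k hkn hjk ih => ?_) hjn ?_
  · have hk := hj.trans hjk
    have hmono : MonotoneOn (fun x => (-1 : ℝ) ^ (k + 1) * derivComb u n k b x) (Icc a b) := by
      have hderiv x := ((hasDerivAt_derivComb (b := b) hu hkn x).const_mul ((-1 : ℝ) ^ (k + 1)))
      refine monotoneOn_of_hasDerivWithinAt_nonneg (convex_Icc a b)
        (fun x _ => (hderiv x).continuousAt.continuousWithinAt)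
        (fun x _ => (hderiv x).hasDerivWithinAt) fun x hx => ?_
      have := ih x (interior_subset hx)
      rw [pow_succ] at this
      linarith
    have hright : (-1 : ℝ) ^ (k + 1) * derivComb u n k b b = 0 := by
      rw [derivComb_right, hvanish k hk hkn, mul_zero, mul_zero]
    intro x hx
    exact hright ▸ hmono hx ⟨hx.1.trans hx.2, le_rfl⟩ hx.2
  · intro x hx
    rw [derivComb_self, ← mul_assoc]
    exact mul_nonpos_of_nonpos_of_nonneg (hsign x hx) (sub_nonneg.2 hx.2)

end

theorem stmt_1_general (n : ℕ) (a b : ℝ) (u : ℝ → ℝ)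
    (hn : 2 ≤ n)
    (hu : ContDiff ℝ (n + 1) u)
    (hsign : ∀ k, 1 ≤ k → k ≤ n + 1 → ∀ x ∈ Set.Icc a b,
      (-1 : ℝ) ^ k * iteratedDeriv k u x ≤ 0)
    (hvanish : ∀ k, 1 ≤ k → k ≤ n - 1 → iteratedDeriv k u b = 0) :
    ∀ x ∈ Set.Icc a b,
      ((n : ℝ) - 1) * deriv u x + iteratedDeriv 2 u x * (b - x) ≤ 0 := by
  intro x hx
  have h := neg_one_pow_mul_derivComb_nonpos hu (hsign (n + 1) (by omega) le_rfl)
    (fun k hk hkn => hvanish k hk (by omega)) le_rfl (by omega) x hx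
  simpa [derivComb, iteratedDeriv_one] using h

theorem stmt_1 (n : ℕ) (a b : ℝ) (u : ℝ → ℝ)
    (hn : 2 ≤ n) (hab : a < b)
    (hu : ContDiff ℝ (n + 1) u)
    (hsign : ∀ k, 1 ≤ k → k ≤ n + 1 → ∀ x ∈ Set.Icc a b,
      (-1 : ℝ) ^ k * iteratedDeriv k u x ≤ 0)
    (hvanish : ∀ k, 1 ≤ k → k ≤ n - 1 → iteratedDeriv k u b = 0) :
    ∀ x ∈ Set.Icc a b,
      ((n : ℝ) - 1) * deriv u x + iteratedDeriv 2 u x * (b - x) ≤ 0 :=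
  stmt_1_general n a b u hn hu hsign hvanish
end

section
/- Let n ≥ 2 and let u : [a,b] → ℝ be (n+1)-times continuously differentiable with (-1)^k u^(k)(x) ≤ 0 on [a,b] for k = 1,…,n+1. If (n-1)·u'(x) + u''(x)·(b-x) ≤ 0 for all x in [a,b], then u^(k)(b) = 0 for all k = 1,…,n-1. -/
/-!
The Arrow–Pratt inequality `(n - 1) u' + u'' (b - x) ≤ 0` says exactly that
`u' x / (b - x) ^ (n - 1)` is nonincreasing on `[a, b)`; since `u' ≥ 0`, this gives
`u' x = O((b - x) ^ (n - 1))` as `x → b⁻`. A `C^m` function `f` that is `o((x - b) ^ m)` from one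
side has `f^(j)(b) = 0` for all `j ≤ m`: once the lower derivatives vanish, Peano's form of
Taylor's theorem leaves `f x = f^(j)(b) (x - b) ^ j / j! + o((x - b) ^ j)`.
Apply this to `f = u'` and `m = n - 2`.
-/

open Set Filter Topology Asymptotics

lemma isLittleO_sub_pow_sub_pow (x₀ : ℝ) {j m : ℕ} (h : j < m) :
    (fun x : ℝ => (x - x₀) ^ m) =o[𝓝 x₀] fun x => (x - x₀) ^ j :=
  (isLittleO_pow_pow h).comp_tendsto (tendsto_sub_nhds_zero_iff.2 tendsto_id)

lemma isBigO_sub_pow_sub_pow (x₀ : ℝ) {j m : ℕ} (h : j ≤ m) :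
    (fun x : ℝ => (x - x₀) ^ m) =O[𝓝 x₀] fun x => (x - x₀) ^ j := by
  rcases h.eq_or_lt with rfl | h
  · exact isBigO_refl _ _
  · exact (isLittleO_sub_pow_sub_pow x₀ h).isBigO

lemma taylorWithinEval_univ_of_iteratedDeriv_eq_zero {f : ℝ → ℝ} {x₀ : ℝ} {j : ℕ}
    (h : ∀ i < j, iteratedDeriv i f x₀ = 0) (x : ℝ) :
    taylorWithinEval f j univ x₀ x = (j.factorial : ℝ)⁻¹ * iteratedDeriv j f x₀ * (x - x₀) ^ j := by
  rw [taylor_within_apply, Finset.sum_range_succ, Finset.sum_eq_zero fun i hi => by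
    rw [iteratedDerivWithin_univ, h i (Finset.mem_range.1 hi), smul_zero]]
  rw [iteratedDerivWithin_univ, smul_eq_mul]
  ring

lemma iteratedDeriv_eq_zero_of_isLittleO_pow {f : ℝ → ℝ} {x₀ : ℝ} {m : ℕ} {l : Filter ℝ}
    [l.NeBot] (hl : l ≤ 𝓝[≠] x₀) (hf : ContDiff ℝ m f)
    (ho : f =o[l] fun x => (x - x₀) ^ m) : ∀ j ≤ m, iteratedDeriv j f x₀ = 0 := by
  intro j
  induction j using Nat.strong_induction_on with
  | _ j ih =>
  intro hj
  have hl' : l ≤ 𝓝 x₀ := hl.trans nhdsWithin_le_nhds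
  have hflat : f =o[l] fun x => (x - x₀) ^ j :=
    ho.trans_isBigO ((isBigO_sub_pow_sub_pow x₀ hj).mono hl')
  have htaylor := (taylor_isLittleO_univ (hf.of_le (by exact_mod_cast hj))).mono hl'
  simp only [taylorWithinEval_univ_of_iteratedDeriv_eq_zero
    (fun i hi => ih i hi (hi.le.trans hj))] at htaylor
  have hmonomial := (hflat.sub htaylor).congr_left fun x => sub_sub_cancel (f x) _
  by_contra hne
  refine isLittleO_irrefl ?_ ((isLittleO_const_mul_left_iff ?_).1 hmonomial)
  · refine Eventually.frequently ?_
    filter_upwards [hl self_mem_nhdsWithin] with x hx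
    exact pow_ne_zero _ (sub_ne_zero.2 hx)
  · exact mul_ne_zero (by positivity) hne

lemma hasDerivAt_div_sub_pow {f : ℝ → ℝ} {f' b x : ℝ} (p : ℕ) (hf : HasDerivAt f f' x)
    (hx : x < b) :
    HasDerivAt (fun y => f y / (b - y) ^ p) ((p * f x + f' * (b - x)) / (b - x) ^ (p + 1)) x := by
  have hbx : b - x ≠ 0 := sub_ne_zero.2 hx.ne'
  have hpow : (p : ℝ) * (b - x) ^ (p - 1) * (b - x) = p * (b - x) ^ p := by
    cases p <;> simp [pow_succ, mul_assoc]
  have hd : HasDerivAt (fun y => (b - y) ^ p) (p * (b - x) ^ (p - 1) * -1) x := by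
    simpa using ((hasDerivAt_id x).const_sub b).fun_pow p
  refine (hf.div hd (pow_ne_zero p hbx)).congr_deriv ?_
  field_simp
  linear_combination f x * (b - x) ^ p * hpow

lemma antitoneOn_div_sub_pow {f : ℝ → ℝ} {a b : ℝ} {p : ℕ} (hc : ContinuousOn f (Ico a b))
    (hd : DifferentiableOn ℝ f (Ioo a b))
    (h : ∀ x ∈ Ioo a b, p * f x + deriv f x * (b - x) ≤ 0) :
    AntitoneOn (fun x => f x / (b - x) ^ p) (Ico a b) := by
  have hderiv : ∀ x ∈ Ioo a b, HasDerivAt (fun y => f y / (b - y) ^ p)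
      ((p * f x + deriv f x * (b - x)) / (b - x) ^ (p + 1)) x := fun x hx =>
    hasDerivAt_div_sub_pow p ((hd x hx).differentiableAt (Ioo_mem_nhds hx.1 hx.2)).hasDerivAt hx.2
  refine antitoneOn_of_deriv_nonpos (convex_Ico a b) ?_ ?_ ?_
  · exact hc.div (by fun_prop) fun x hx => pow_ne_zero p (sub_ne_zero.2 hx.2.ne')
  · rw [interior_Ico]
    exact fun x hx => (hderiv x hx).differentiableAt.differentiableWithinAt
  · rw [interior_Ico]
    intro x hx
    rw [(hderiv x hx).deriv]
    exact div_nonpos_of_nonpos_of_nonneg (h x hx) (pow_nonneg (sub_nonneg.2 hx.2.le) _)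

lemma isBigO_sub_pow_of_mul_add_deriv_mul_nonpos {f : ℝ → ℝ} {a b : ℝ} {p : ℕ} (hab : a < b)
    (hc : ContinuousOn f (Ico a b)) (hd : DifferentiableOn ℝ f (Ioo a b))
    (h : ∀ x ∈ Ioo a b, p * f x + deriv f x * (b - x) ≤ 0) (hf : ∀ x ∈ Ico a b, 0 ≤ f x) :
    f =O[𝓝[<] b] fun x => (x - b) ^ p := by
  refine IsBigO.of_bound (f a / (b - a) ^ p) ?_
  filter_upwards [Ioo_mem_nhdsLT hab] with x hx
  have hbx : 0 < b - x := sub_pos.2 hx.2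
  have hle := antitoneOn_div_sub_pow hc hd h (left_mem_Ico.2 hab) (Ioo_subset_Ico_self hx) hx.1.le
  rw [Real.norm_of_nonneg (hf x (Ioo_subset_Ico_self hx)), norm_pow, Real.norm_eq_abs,
    abs_sub_comm, abs_of_pos hbx]
  exact (div_le_iff₀ (pow_pos hbx p)).1 hle

theorem stmt_2 (n : ℕ) (a b : ℝ) (u : ℝ → ℝ)
    (hn : 2 ≤ n) (hab : a < b)
    (hu : ContDiff ℝ (n + 1) u)
    (hsign : ∀ k, 1 ≤ k → k ≤ n + 1 → ∀ x ∈ Set.Icc a b,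
      (-1 : ℝ) ^ k * iteratedDeriv k u x ≤ 0)
    (hAP : ∀ x ∈ Set.Icc a b,
      ((n : ℝ) - 1) * deriv u x + iteratedDeriv 2 u x * (b - x) ≤ 0) :
    ∀ k, 1 ≤ k → k ≤ n - 1 → iteratedDeriv k u b = 0 := by
  intro k hk1 hk2
  have hu' : ContDiff ℝ n (deriv u) := hu.deriv'
  have hu'_nonneg : ∀ x ∈ Ico a b, 0 ≤ deriv u x := fun x hx => by
    simpa using hsign 1 le_rfl (by omega) x (Ico_subset_Icc_self hx)
  have hAP' : ∀ x ∈ Ioo a b, ((n - 1 : ℕ) : ℝ) * deriv u x + deriv (deriv u) x * (b - x) ≤ 0 := by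
    intro x hx
    rw [Nat.cast_pred (by omega), ← iteratedDeriv_one, ← iteratedDeriv_succ, iteratedDeriv_one]
    exact hAP x (Ioo_subset_Icc_self hx)
  have hbigO : deriv u =O[𝓝[<] b] fun x => (x - b) ^ (n - 1) :=
    isBigO_sub_pow_of_mul_add_deriv_mul_nonpos hab hu'.continuous.continuousOn
      (hu'.differentiable (by norm_cast; omega)).differentiableOn hAP' hu'_nonneg
  have hlittleO : deriv u =o[𝓝[<] b] fun x => (x - b) ^ (n - 2) :=
    hbigO.trans_isLittleO ((isLittleO_sub_pow_sub_pow b (by omega)).mono nhdsWithin_le_nhds)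
  have hvanish := iteratedDeriv_eq_zero_of_isLittleO_pow (nhdsLT_le_nhdsNE b)
    (hu'.of_le (by exact_mod_cast (by omega : n - 2 ≤ n))) hlittleO (k - 1) (by omega)
  rwa [← iteratedDeriv_succ', Nat.sub_add_cancel hk1] at hvanish
end

section
/- For any a < b and integer n ≥ 2, there exists a twice continuously differentiable function g : [a,b] → ℝ with g' ≥ 0, g'' ≤ 0 and (n-1)·g'(x) + g''(x)·(b-x) ≤ 0 on [a,b], such that the function x ↦ (g(b) - g(x))^(1/n) is not convex on [a,b]. Concretely, with a = 0 and γ = (n+1)/(2b(n+2)), the function g(x) = -(b-x)^(n+1)·(1 - γ(b-x)) has these properties. -/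
open Real Set Topology

/-! Write `t = b - x` and `s = γ t`; the counterexample is `g = -u` with `u = t ^ (n + 1) (1 - s)`.
On `[a, b]` we have `s ≤ (n + 1) / (2 (n + 2))`, and the three differential inequalities follow by
factoring out powers of `t`. For `f = u ^ (1 / n)` one has
`n ^ 2 u ^ (2 - 1 / n) f'' = n u u'' - (n - 1) u' ^ 2 = t ^ (2 n) q(s)` with
`q(s) = 2 (n + 2) s ^ 2 - 4 (n + 1) s + (n + 1)`. The quadratic `q` is convex and negative at
`s = 1 / 3` and `s = 3 / 8`, so `f` is strictly concave where `1 / 3 ≤ s ≤ 3 / 8`; for `n ≥ 2` this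
range of `x` lies inside `[a, b]`, so `f` is not convex there. -/

theorem StrictConcaveOn.not_convexOn {E : Type*} [AddCommMonoid E] [Module ℝ E] {s t : Set E}
    {f : E → ℝ} (hf : StrictConcaveOn ℝ t f) (hts : t ⊆ s) {x y : E} (hx : x ∈ t) (hy : y ∈ t)
    (hxy : x ≠ y) : ¬ ConvexOn ℝ s f := by
  intro hconv
  have hlt := hf.2 hx hy hxy (show (0 : ℝ) < 1 / 2 by norm_num) (show (0 : ℝ) < 1 / 2 by norm_num)
    (by norm_num)
  have hle := (hconv.subset hts hf.1).2 hx hy (show (0 : ℝ) ≤ 1 / 2 by norm_num)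
    (show (0 : ℝ) ≤ 1 / 2 by norm_num) (by norm_num)
  exact hle.not_gt hlt

theorem strictConcaveOn_rpow_comp {s : Set ℝ} (hs : Convex ℝ s) {u u' u'' : ℝ → ℝ} {p : ℝ}
    (hp : 0 < p) (hcont : ContinuousOn u s) (hu : ∀ x ∈ interior s, HasDerivAt u (u' x) x)
    (hu' : ∀ x ∈ interior s, HasDerivAt u' (u'' x) x) (hpos : ∀ x ∈ s, 0 < u x)
    (hneg : ∀ x ∈ interior s, u x * u'' x + (p - 1) * u' x ^ 2 < 0) :
    StrictConcaveOn ℝ s (fun x => u x ^ p) := by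
  refine strictConcaveOn_of_deriv2_neg hs (hcont.rpow_const fun x hx => Or.inl (hpos x hx).ne')
    fun x hx => ?_
  have hux : 0 < u x := hpos x (interior_subset hx)
  have hderiv : deriv (fun y => u y ^ p) =ᶠ[𝓝 x] fun y => u' y * p * u y ^ (p - 1) := by
    filter_upwards [isOpen_interior.mem_nhds hx] with y hy
    exact ((hu y hy).rpow_const (Or.inl (hpos y (interior_subset hy)).ne')).deriv
  have hderiv2 := (((hu' x hx).mul_const p).mul
    ((hu x hx).rpow_const (p := p - 1) (Or.inl hux.ne'))).congr_of_eventuallyEq hderiv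
  rw [Function.iterate_succ_apply, Function.iterate_one, hderiv2.deriv]
  have hsplit : u x ^ (p - 1) = u x ^ (p - 1 - 1) * u x := by
    rw [← rpow_add_one hux.ne']; ring_nf
  calc u'' x * p * u x ^ (p - 1) + u' x * p * (u' x * (p - 1) * u x ^ (p - 1 - 1))
      = p * u x ^ (p - 1 - 1) * (u x * u'' x + (p - 1) * u' x ^ 2) := by rw [hsplit]; ring
    _ < 0 := mul_neg_of_pos_of_neg (by positivity) (hneg x hx)

namespace APNotSubsetLP

variable (n : ℕ) (b γ : ℝ)

noncomputable def profile (x : ℝ) : ℝ := (b - x) ^ (n + 1) * (1 - γ * (b - x))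

noncomputable def profileDeriv (x : ℝ) : ℝ := -((b - x) ^ n * (n + 1 - (n + 2) * γ * (b - x)))

noncomputable def profileDeriv2 (x : ℝ) : ℝ :=
  (n + 1) * (b - x) ^ (n - 1) * (n - (n + 2) * γ * (b - x))

theorem hasDerivAt_profile (x : ℝ) : HasDerivAt (profile n b γ) (profileDeriv n b γ x) x := by
  have hlin : HasDerivAt (fun y => b - y) (-1) x := (hasDerivAt_id x).const_sub b
  refine ((hlin.pow (n + 1)).mul ((hlin.const_mul γ).const_sub 1)).congr_deriv ?_
  simp only [profileDeriv, Pi.pow_apply]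
  push_cast
  ring

theorem hasDerivAt_profileDeriv (hn : 1 ≤ n) (x : ℝ) :
    HasDerivAt (profileDeriv n b γ) (profileDeriv2 n b γ x) x := by
  have hlin : HasDerivAt (fun y => b - y) (-1) x := (hasDerivAt_id x).const_sub b
  refine ((hlin.pow n).mul
    ((hlin.const_mul ((n + 2) * γ)).const_sub ((n : ℝ) + 1))).neg.congr_deriv ?_
  obtain ⟨m, rfl⟩ := Nat.exists_eq_add_of_le' hn
  simp only [profileDeriv2, Pi.pow_apply, Nat.add_sub_cancel]
  push_cast
  ring

theorem profile_self : profile n b γ b = 0 := by simp [profile]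

variable {n b γ}

theorem profile_pos {x : ℝ} (hx : 0 < b - x) (hγ : γ * (b - x) < 1) : 0 < profile n b γ x :=
  mul_pos (pow_pos hx _) (sub_pos.2 hγ)

theorem profileDeriv_nonpos {x : ℝ} (hx : 0 ≤ b - x) (hγ : 2 * ((n + 2) * γ * (b - x)) ≤ n + 1) :
    profileDeriv n b γ x ≤ 0 := by
  have : 0 ≤ (n + 1 : ℝ) - (n + 2) * γ * (b - x) := by linarith
  simpa [profileDeriv] using mul_nonneg (pow_nonneg hx n) this

theorem profileDeriv2_nonneg (hn : 1 ≤ n) {x : ℝ} (hx : 0 ≤ b - x)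
    (hγ : 2 * ((n + 2) * γ * (b - x)) ≤ n + 1) : 0 ≤ profileDeriv2 n b γ x := by
  have hn' : (1 : ℝ) ≤ n := by exact_mod_cast hn
  have : 0 ≤ (n : ℝ) - (n + 2) * γ * (b - x) := by linarith
  exact mul_nonneg (mul_nonneg (by positivity) (pow_nonneg hx _)) this

theorem profileDeriv_combination_nonneg (hn : 1 ≤ n) {x : ℝ} (hx : 0 ≤ b - x)
    (hγ : 2 * ((n + 2) * γ * (b - x)) ≤ n + 1) :
    0 ≤ (n - 1) * profileDeriv n b γ x + profileDeriv2 n b γ x * (b - x) := by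
  obtain ⟨m, rfl⟩ := Nat.exists_eq_add_of_le' hn
  have key : (↑(m + 1) - 1) * profileDeriv (m + 1) b γ x + profileDeriv2 (m + 1) b γ x * (b - x)
      = (b - x) ^ (m + 1) * ((m + 2) - 2 * ((m + 3) * γ * (b - x))) := by
    simp only [profileDeriv, profileDeriv2, Nat.add_sub_cancel]
    push_cast
    ring
  rw [key]
  push_cast at hγ
  exact mul_nonneg (pow_nonneg hx _) (by linarith)

theorem profile_mul_profileDeriv2_add_lt (hn : 1 ≤ n) {x : ℝ} (h₁ : 1 / 3 < γ * (b - x))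
    (h₂ : γ * (b - x) < 3 / 8) :
    profile n b γ x * profileDeriv2 n b γ x + (1 / n - 1) * profileDeriv n b γ x ^ 2 < 0 := by
  obtain ⟨m, rfl⟩ := Nat.exists_eq_add_of_le' hn
  have hbx : (b - x) ^ (m + 1) ≠ 0 := pow_ne_zero _ fun h => by rw [h, mul_zero] at h₁; linarith
  have key : profile (m + 1) b γ x * profileDeriv2 (m + 1) b γ x
        + (1 / ↑(m + 1) - 1) * profileDeriv (m + 1) b γ x ^ 2
      = ((b - x) ^ (m + 1)) ^ 2 / (m + 1) *
          (2 * (m + 3) * (γ * (b - x)) ^ 2 - 4 * (m + 2) * (γ * (b - x)) + (m + 2)) := by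
    simp only [profile, profileDeriv, profileDeriv2, Nat.add_sub_cancel]
    push_cast
    field_simp
    ring
  rw [key]
  refine mul_neg_of_pos_of_neg (by positivity) ?_
  nlinarith [mul_pos (sub_pos.2 h₁) (sub_pos.2 h₂)]

theorem strictConcaveOn_profile_rpow (hn : 1 ≤ n) (hγ : 0 < γ) :
    StrictConcaveOn ℝ (Icc (b - 3 / (8 * γ)) (b - 1 / (3 * γ)))
      (fun x => profile n b γ x ^ (1 / n : ℝ)) := by
  have hn' : (0 : ℝ) < n := by exact_mod_cast hn
  refine strictConcaveOn_rpow_comp (convex_Icc _ _) (by positivity)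
    (fun x _ => (hasDerivAt_profile n b γ x).continuousAt.continuousWithinAt)
    (fun x _ => hasDerivAt_profile n b γ x) (fun x _ => hasDerivAt_profileDeriv n b γ hn x)
    (fun x hx => ?_) (fun x hx => ?_)
  · obtain ⟨hx₁, hx₂⟩ := hx
    rw [sub_le_comm, le_div_iff₀ (by positivity)] at hx₁
    rw [le_sub_comm, div_le_iff₀ (by positivity)] at hx₂
    exact profile_pos (by nlinarith) (by linarith)
  · rw [interior_Icc] at hx
    obtain ⟨hx₁, hx₂⟩ := hx
    rw [sub_lt_comm, lt_div_iff₀ (by positivity)] at hx₁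
    rw [lt_sub_comm, div_lt_iff₀ (by positivity)] at hx₂
    exact profile_mul_profileDeriv2_add_lt hn (by linarith) (by linarith)

end APNotSubsetLP

open APNotSubsetLP in
theorem stmt_3 (n : ℕ) (a b : ℝ) (hn : 2 ≤ n) (hab : a < b) :
    ∃ g : ℝ → ℝ, ContDiff ℝ 2 g ∧
      (∀ x ∈ Set.Icc a b, 0 ≤ deriv g x) ∧
      (∀ x ∈ Set.Icc a b, deriv (deriv g) x ≤ 0) ∧
      (∀ x ∈ Set.Icc a b,
        ((n : ℝ) - 1) * deriv g x + deriv (deriv g) x * (b - x) ≤ 0) ∧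
      ¬ ConvexOn ℝ (Set.Icc a b) (fun x => (g b - g x) ^ ((1 : ℝ) / n)) := by
  set γ := ((n : ℝ) + 1) / (2 * (b - a) * (n + 2)) with hγ
  have hγ_pos : 0 < γ := by have : 0 < b - a := sub_pos.2 hab; positivity
  have hγ_eq : 2 * ((n + 2) * γ * (b - a)) = n + 1 := by rw [hγ]; field_simp [(sub_pos.2 hab).ne']
  have hbound : ∀ x ∈ Icc a b, 0 ≤ b - x ∧ 2 * ((n + 2) * γ * (b - x)) ≤ n + 1 := fun x hx =>
    ⟨sub_nonneg.2 hx.2, by rw [← hγ_eq]; gcongr; linarith [hx.1]⟩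
  have hderiv : deriv (fun x => -profile n b γ x) = fun x => -profileDeriv n b γ x :=
    funext fun x => (hasDerivAt_profile n b γ x).neg.deriv
  have hderiv2 : deriv (fun x => -profileDeriv n b γ x) = fun x => -profileDeriv2 n b γ x :=
    funext fun x => (hasDerivAt_profileDeriv n b γ (by omega) x).neg.deriv
  refine ⟨fun x => -profile n b γ x, by unfold profile; fun_prop, fun x hx => ?_, fun x hx => ?_,
    fun x hx => ?_, ?_⟩
  · simpa [hderiv] using profileDeriv_nonpos (hbound x hx).1 (hbound x hx).2
  · simpa [hderiv, hderiv2] using profileDeriv2_nonneg (by omega) (hbound x hx).1 (hbound x hx).2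
  · simp only [hderiv, hderiv2]
    linarith [profileDeriv_combination_nonneg (by omega) (hbound x hx).1 (hbound x hx).2]
  · simp only [profile_self, neg_zero, zero_sub, neg_neg]
    have h38 : 3 / (8 * γ) ≤ b - a := by
      rw [div_le_iff₀ (by positivity)]
      have : (2 : ℝ) ≤ n := by exact_mod_cast hn
      nlinarith
    have hlt : b - 3 / (8 * γ) < b - 1 / (3 * γ) := by
      rw [sub_lt_sub_iff_left, div_lt_div_iff₀ (by positivity) (by positivity)]
      linarith
    exact (strictConcaveOn_profile_rpow (by omega) hγ_pos).not_convexOn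
      (Icc_subset_Icc (by linarith) (by linarith [show 0 < 1 / (3 * γ) by positivity]))
      (left_mem_Icc.2 hlt.le) (right_mem_Icc.2 hlt.le) hlt.ne
end

section
/- Let u : (a,b) → ℝ be twice continuously differentiable, strictly increasing, concave, with u(b⁻) limit equal to 0 (normalize u(b) = 0). Then x ↦ (-u(x))^(1/n) is convex on (a,b) if and only if u(x)·u''(x) / (u'(x))² ≥ (n-1)/n for all x in (a,b). -/
/-! With `w = -u > 0` and `p = 1/n`, the second derivative of `w ^ p` is
`p w^(p-2) (u u'' - (1 - p) u'^2)`, and on an open interval convexity of a twice differentiable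
function is nonnegativity of its second derivative. Strict monotonicity with `u b = 0` gives
`u < 0`, and together with concavity it gives `u' > 0`, so the sign condition may be divided
by `u'^2`. -/

open Set Filter

lemma StrictMonoOn.lt_of_continuousWithinAt_right {α β : Type*} [LinearOrder α]
    [TopologicalSpace α] [OrderTopology α] [DenselyOrdered α] [LinearOrder β]
    [TopologicalSpace β] [OrderClosedTopology β] {f : α → β} {a b x : α}
    (hf : StrictMonoOn f (Ioo a b)) (hb : ContinuousWithinAt f (Ioo a b) b)
    (hx : x ∈ Ioo a b) : f x < f b := by
  obtain ⟨y, hxy, hyb⟩ := exists_between hx.2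
  have hy : y ∈ Ioo a b := ⟨hx.1.trans hxy, hyb⟩
  have hab : a < b := hx.1.trans hx.2
  have hcl : ClusterPt b (𝓟 (Ioo a b)) := by
    rw [← mem_closure_iff_clusterPt, closure_Ioo hab.ne]
    exact right_mem_Icc.2 hab.le
  calc f x < f y := hf hx hy hxy
    _ ≤ f b := hf.monotoneOn.insert_of_continuousWithinAt hcl hb
        (mem_insert_of_mem _ hy) (mem_insert _ _) hyb.le

lemma ConcaveOn.deriv_pos_of_lt {S : Set ℝ} {f : ℝ → ℝ} {x y : ℝ} (hfc : ConcaveOn ℝ S f)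
    (hx : x ∈ S) (hy : y ∈ S) (hxy : x < y) (hfxy : f x < f y)
    (hfd : DifferentiableAt ℝ f x) :
    0 < deriv f x :=
  (div_pos (sub_pos.2 hfxy) (sub_pos.2 hxy)).trans_le
    (slope_def_field f x y ▸ hfc.slope_le_deriv hx hy hxy hfd)

lemma convexOn_iff_hasDerivAt2_nonneg {D : Set ℝ} {f f' f'' : ℝ → ℝ} (hD : Convex ℝ D)
    (hDo : IsOpen D) (hf : ∀ x ∈ D, HasDerivAt f (f' x) x)
    (hf' : ∀ x ∈ D, HasDerivAt f' (f'' x) x) :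
    ConvexOn ℝ D f ↔ ∀ x ∈ D, 0 ≤ f'' x := by
  refine ⟨fun hfc x hx => ?_, fun hf''₀ => ?_⟩
  · have hmono : MonotoneOn f' D := fun y hy z hz hyz => by
      simpa only [(hf y hy).deriv, (hf z hz).deriv] using
        hfc.monotoneOn_deriv (fun t ht => (hf t ht).differentiableAt) hy hz hyz
    have hacc : AccPt x (𝓟 D) := by
      simpa using (PerfectSpace.univ_preperfect x (mem_univ x)).nhds_inter (hDo.mem_nhds hx)
    exact (hf' x hx).hasDerivWithinAt.nonneg_of_monotoneOn hacc hmono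
  · refine convexOn_of_hasDerivWithinAt2_nonneg (f' := f') (f'' := f'') hD
      (fun x hx => (hf x hx).continuousAt.continuousWithinAt) ?_ ?_ ?_ <;> rw [hDo.interior_eq]
    exacts [fun x hx => (hf x hx).hasDerivWithinAt, fun x hx => (hf' x hx).hasDerivWithinAt,
      hf''₀]

lemma hasDerivAt_rpow_const_second {w w' : ℝ → ℝ} {w'' x p : ℝ} (hw : HasDerivAt w (w' x) x)
    (hw' : HasDerivAt w' w'' x) (hx : 0 < w x) :
    HasDerivAt (fun y => w' y * p * w y ^ (p - 1))
      (p * w x ^ (p - 2) * (w x * w'' + (p - 1) * w' x ^ 2)) x := by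
  refine ((hw'.mul_const p).mul (hw.rpow_const (p := p - 1) (Or.inl hx.ne'))).congr_deriv ?_
  have hsplit : w x ^ (p - 1) = w x ^ (p - 2) * w x := by
    rw [← Real.rpow_add_one hx.ne']; ring_nf
  rw [hsplit, show p - 1 - 1 = p - 2 by ring]
  ring

theorem stmt_6_general (n : ℕ) (a b : ℝ) (u : ℝ → ℝ)
    (hn : 1 ≤ n)
    (hu : ContDiff ℝ 2 u)
    (hmono : StrictMonoOn u (Set.Ioo a b))
    (hconc : ConcaveOn ℝ (Set.Ioo a b) u)
    (hub : u b = 0) :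
    ConvexOn ℝ (Set.Ioo a b) (fun x => (-u x) ^ ((1 : ℝ) / n)) ↔
      ∀ x ∈ Set.Ioo a b,
        ((n : ℝ) - 1) / n ≤ u x * deriv (deriv u) x / (deriv u x) ^ 2 := by
  have hn₀ : (0 : ℝ) < n := by exact_mod_cast hn
  have hud : Differentiable ℝ u := hu.differentiable two_ne_zero
  have hu'd : Differentiable ℝ (deriv u) := hu.differentiable_deriv_two
  have hneg : ∀ x ∈ Ioo a b, 0 < -u x := fun x hx => by
    simpa only [hub, neg_pos] using
      hmono.lt_of_continuousWithinAt_right hud.continuous.continuousWithinAt hx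
  have hpos : ∀ x ∈ Ioo a b, 0 < deriv u x := fun x hx => by
    obtain ⟨y, hxy, hyb⟩ := exists_between hx.2
    have hy : y ∈ Ioo a b := ⟨hx.1.trans hxy, hyb⟩
    exact hconc.deriv_pos_of_lt hx hy hxy (hmono hx hy hxy) (hud x)
  rw [convexOn_iff_hasDerivAt2_nonneg (convex_Ioo a b) isOpen_Ioo
    (fun x hx => (hud x).hasDerivAt.fun_neg.rpow_const (Or.inl (hneg x hx).ne'))
    (fun x hx => hasDerivAt_rpow_const_second (hud x).hasDerivAt.fun_neg
      (hu'd x).hasDerivAt.fun_neg (hneg x hx))]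
  refine forall₂_congr fun x hx => ?_
  have hn' : ((n : ℝ) - 1) / n = 1 - 1 / n := by field_simp
  rw [mul_nonneg_iff_of_pos_left (by have := hneg x hx; positivity),
    le_div_iff₀ (pow_pos (hpos x hx) 2), neg_mul_neg, neg_sq, hn']
  constructor <;> intro h <;> linarith

theorem stmt_6 (n : ℕ) (a b : ℝ) (u : ℝ → ℝ)
    (hn : 1 ≤ n) (hab : a < b)
    (hu : ContDiff ℝ 2 u)
    (hmono : StrictMonoOn u (Set.Ioo a b))
    (hconc : ConcaveOn ℝ (Set.Ioo a b) u)
    (hub : u b = 0) :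
    ConvexOn ℝ (Set.Ioo a b) (fun x => (-u x) ^ ((1 : ℝ) / n)) ↔
      ∀ x ∈ Set.Ioo a b,
        ((n : ℝ) - 1) / n ≤ u x * deriv (deriv u) x / (deriv u x) ^ 2 :=
  stmt_6_general n a b u hn hu hmono hconc hub
end

section
/- Let n be a positive integer, a < b, and let f : [a,b] → ℝ be n-times continuously differentiable with (-1)^k f^(k)(x) ≤ 0 on [a,b] for k = 1,…,n, and suppose (f(b) - f(x))^(1/n) is convex on [a,b]. Then for every random variable X with values in [a,b]: E[f(X)] ≤ f(b - (E[(b-X)^n])^(1/n)) ≤ f(E[X]). -/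
open MeasureTheory Set

/-!
With `h s = (f b - f (b - s)) ^ (1 / n)`, a nonnegative convex function on `[0, b - a]` vanishing
at `0`, put `ψ t = h (t ^ (1 / n)) ^ n = f b - f (b - t ^ (1 / n))`. Since `h` is convex with
`h 0 = 0`, both its chord slopes and the ratio `h s / s` are nondecreasing; writing `y ^ n - x ^ n`
as `(y - x)` times a geometric sum, this makes the chord slopes of `ψ` nondecreasing, so `ψ` is
convex on `[0, (b - a) ^ n]`. Jensen's inequality for `ψ` at `(b - X) ^ n` is the first
inequality. The second follows from `f' ≥ 0` and the power mean inequality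
`E[b - X] ≤ E[(b - X) ^ n] ^ (1 / n)`.
-/

theorem geom_sum₂_le_geom_sum₂ {R : Type*} [CommSemiring R] [PartialOrder R] [IsOrderedRing R]
    {x x' y y' : R} (hx : 0 ≤ x) (hy : 0 ≤ y) (hxx' : x ≤ x') (hyy' : y ≤ y') (n : ℕ) :
    ∑ i ∈ Finset.range n, x ^ i * y ^ (n - 1 - i) ≤
      ∑ i ∈ Finset.range n, x' ^ i * y' ^ (n - 1 - i) := by
  gcongr
  exact pow_nonneg (hx.trans hxx') _

theorem geom_sum₂_mul_mul {R : Type*} [CommSemiring R] (c x y : R) (n : ℕ) :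
    ∑ i ∈ Finset.range n, (c * x) ^ i * (c * y) ^ (n - 1 - i) =
      c ^ (n - 1) * ∑ i ∈ Finset.range n, x ^ i * y ^ (n - 1 - i) := by
  rw [Finset.mul_sum]
  refine Finset.sum_congr rfl fun i hi => ?_
  have hi : i + (n - 1 - i) = n - 1 := by have := Finset.mem_range.1 hi; omega
  rw [mul_pow, mul_pow, mul_mul_mul_comm, ← pow_add, hi]

/-- The chord slope of `(s ^ n, y ^ n)` is that of `(s, y)` times a ratio of geometric sums, and
the line `y = c * s` separates the two ratios at `c ^ (n - 1)`. -/
theorem pow_slope_le_pow_slope {s₁ s₂ s₃ y₁ y₂ y₃ c : ℝ} {n : ℕ} (hn : n ≠ 0) (hs₁ : 0 ≤ s₁)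
    (hs₁₂ : s₁ < s₂) (hs₂₃ : s₂ < s₃) (hc : 0 ≤ c) (hy₁ : 0 ≤ y₁) (hy₁c : y₁ ≤ c * s₁)
    (hy₂ : y₂ = c * s₂) (hy₃ : c * s₃ ≤ y₃)
    (hslope : (y₂ - y₁) / (s₂ - s₁) ≤ (y₃ - y₂) / (s₃ - s₂)) :
    (y₂ ^ n - y₁ ^ n) / (s₂ ^ n - s₁ ^ n) ≤ (y₃ ^ n - y₂ ^ n) / (s₃ ^ n - s₂ ^ n) := by
  set G : ℝ → ℝ → ℝ := fun x y => ∑ i ∈ Finset.range n, x ^ i * y ^ (n - 1 - i)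
  have hs₂ : 0 < s₂ := hs₁.trans_lt hs₁₂
  have hGpos {x y : ℝ} (hy : 0 ≤ y) (hxy : y < x) : 0 < G x y := by
    have := sub_pos.2 (pow_lt_pow_left₀ hxy hy hn)
    rw [← geom_sum₂_mul] at this
    exact pos_of_mul_pos_left this (sub_pos.2 hxy).le
  have h₁₂ : G y₂ y₁ / G s₂ s₁ ≤ c ^ (n - 1) := by
    rw [div_le_iff₀ (hGpos hs₁ hs₁₂), ← geom_sum₂_mul_mul, hy₂]
    exact geom_sum₂_le_geom_sum₂ (by positivity) hy₁ le_rfl hy₁c n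
  have h₂₃ : c ^ (n - 1) ≤ G y₃ y₂ / G s₃ s₂ := by
    rw [le_div_iff₀ (hGpos hs₂.le hs₂₃), ← geom_sum₂_mul_mul, hy₂]
    exact geom_sum₂_le_geom_sum₂ (mul_nonneg hc (hs₂.trans hs₂₃).le) (mul_nonneg hc hs₂.le) hy₃
      le_rfl n
  have hslope_nonneg : 0 ≤ (y₂ - y₁) / (s₂ - s₁) := by
    have : y₁ ≤ y₂ := hy₂ ▸ hy₁c.trans (mul_le_mul_of_nonneg_left hs₁₂.le hc)
    exact div_nonneg (sub_nonneg.2 this) (sub_pos.2 hs₁₂).le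
  rw [← geom_sum₂_mul, ← geom_sum₂_mul, ← geom_sum₂_mul, ← geom_sum₂_mul, mul_comm,
    mul_comm (G s₂ s₁), mul_comm (G y₃ y₂), mul_comm (G s₃ s₂), mul_div_mul_comm, mul_div_mul_comm]
  calc (y₂ - y₁) / (s₂ - s₁) * (G y₂ y₁ / G s₂ s₁)
      ≤ (y₂ - y₁) / (s₂ - s₁) * c ^ (n - 1) := mul_le_mul_of_nonneg_left h₁₂ hslope_nonneg
    _ ≤ (y₃ - y₂) / (s₃ - s₂) * c ^ (n - 1) :=
        mul_le_mul_of_nonneg_right hslope (by positivity)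
    _ ≤ (y₃ - y₂) / (s₃ - s₂) * (G y₃ y₂ / G s₃ s₂) :=
        mul_le_mul_of_nonneg_left h₂₃ (hslope_nonneg.trans hslope)

theorem ConvexOn.comp_const_sub {𝕜 E β : Type*} [Field 𝕜] [LinearOrder 𝕜] [AddCommGroup E]
    [Module 𝕜 E] [AddCommMonoid β] [PartialOrder β] [SMul 𝕜 β] {s : Set E} {f : E → β}
    (hf : ConvexOn 𝕜 s f) (c : E) :
    ConvexOn 𝕜 ((fun z => c - z) ⁻¹' s) (fun z => f (c - z)) :=
  hf.comp_affineMap (AffineMap.const 𝕜 E c - AffineMap.id 𝕜 E)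

theorem rpow_inv_natCast_mem_Icc {L t : ℝ} (hL : 0 ≤ L) {n : ℕ} (hn : n ≠ 0)
    (ht : t ∈ Icc 0 (L ^ n)) : t ^ (n⁻¹ : ℝ) ∈ Icc 0 L := by
  refine ⟨Real.rpow_nonneg ht.1 _, ?_⟩
  simpa only [Real.pow_rpow_inv_natCast hL hn] using
    Real.rpow_le_rpow ht.1 ht.2 (by positivity : (0 : ℝ) ≤ (n : ℝ)⁻¹)

theorem ConvexOn.pow_comp_rpow_inv_natCast {L : ℝ} (hL : 0 ≤ L) {h : ℝ → ℝ}
    (hh : ConvexOn ℝ (Icc 0 L) h) (h₀ : h 0 = 0) (hh_nonneg : ∀ s ∈ Icc 0 L, 0 ≤ h s)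
    {n : ℕ} (hn : n ≠ 0) :
    ConvexOn ℝ (Icc 0 (L ^ n)) (fun t => h (t ^ (n⁻¹ : ℝ)) ^ n) := by
  have hroot : StrictMonoOn (fun t : ℝ => t ^ (n⁻¹ : ℝ)) (Ici 0) := fun x hx y _ hxy =>
    Real.rpow_lt_rpow hx hxy (by positivity)
  refine convexOn_of_slope_mono_adjacent (convex_Icc _ _)
    fun {t₁ t₂ t₃} ht₁ ht₃ h₁₂ h₂₃ => ?_
  have ht₂ : 0 ≤ t₂ := ht₁.1.trans h₁₂.le
  have hs₁₂ := hroot ht₁.1 ht₂ h₁₂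
  have hs₂₃ := hroot ht₂ ht₃.1 h₂₃
  set s₁ := t₁ ^ (n⁻¹ : ℝ)
  set s₂ := t₂ ^ (n⁻¹ : ℝ)
  set s₃ := t₃ ^ (n⁻¹ : ℝ)
  have hs₁ : 0 ≤ s₁ := Real.rpow_nonneg ht₁.1 _
  have hs₂ : 0 < s₂ := hs₁.trans_lt hs₁₂
  have hs₃ : s₃ ≤ L := (rpow_inv_natCast_mem_Icc hL hn ht₃).2
  have hmem₁ : s₁ ∈ Icc 0 L := ⟨hs₁, (hs₁₂.trans hs₂₃).le.trans hs₃⟩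
  have hmem₂ : s₂ ∈ Icc 0 L := ⟨hs₂.le, hs₂₃.le.trans hs₃⟩
  have hmem₃ : s₃ ∈ Icc 0 L := ⟨(hs₂.trans hs₂₃).le, hs₃⟩
  have hmem₀ : (0 : ℝ) ∈ Icc 0 L := ⟨le_rfl, hL⟩
  have hpow (t : ℝ) (ht : 0 ≤ t) : t = (t ^ (n⁻¹ : ℝ)) ^ n :=
    (Real.rpow_inv_natCast_pow ht hn).symm
  have hratio : MonotoneOn (fun s => h s / s) (Ioc 0 L) := fun x hx y hy hxy => by
    simpa [h₀] using hh.secant_mono hmem₀ (Ioc_subset_Icc_self hx) (Ioc_subset_Icc_self hy)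
      hx.1.ne' hy.1.ne' hxy
  have hy₁ : h s₁ ≤ h s₂ / s₂ * s₁ := by
    rcases hs₁.eq_or_lt with h0 | hpos
    · simp [← h0, h₀]
    · exact (div_le_iff₀ hpos).1 (hratio ⟨hpos, hmem₁.2⟩ ⟨hs₂, hmem₂.2⟩ hs₁₂.le)
  have hy₃ : h s₂ / s₂ * s₃ ≤ h s₃ := (le_div_iff₀ (hs₂.trans hs₂₃)).1
    (hratio ⟨hs₂, hmem₂.2⟩ ⟨hs₂.trans hs₂₃, hs₃⟩ hs₂₃.le)
  show (h s₂ ^ n - h s₁ ^ n) / (t₂ - t₁) ≤ (h s₃ ^ n - h s₂ ^ n) / (t₃ - t₂)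
  rw [hpow t₁ ht₁.1, hpow t₂ ht₂, hpow t₃ ht₃.1]
  exact pow_slope_le_pow_slope hn hs₁ hs₁₂ hs₂₃ (div_nonneg (hh_nonneg _ hmem₂) hs₂.le)
    (hh_nonneg _ hmem₁) hy₁ (div_mul_cancel₀ _ hs₂.ne').symm hy₃
    (hh.slope_mono_adjacent hmem₁ hmem₃ hs₁₂ hs₂₃)

theorem convexOn_sub_comp_sub_rpow_inv_natCast {f : ℝ → ℝ} {a b : ℝ} (hab : a ≤ b) {n : ℕ}
    (hn : n ≠ 0) (hf : ∀ x ∈ Icc a b, f x ≤ f b)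
    (hconv : ConvexOn ℝ (Icc a b) (fun x => (f b - f x) ^ (n⁻¹ : ℝ))) :
    ConvexOn ℝ (Icc 0 ((b - a) ^ n)) (fun t => f b - f (b - t ^ (n⁻¹ : ℝ))) := by
  have hmem (s : ℝ) (hs : s ∈ Icc 0 (b - a)) : b - s ∈ Icc a b :=
    ⟨by linarith [hs.2], by linarith [hs.1]⟩
  have hnonneg (s : ℝ) (hs : s ∈ Icc 0 (b - a)) : 0 ≤ f b - f (b - s) :=
    sub_nonneg.2 (hf _ (hmem s hs))
  have hh : ConvexOn ℝ (Icc 0 (b - a)) (fun s => (f b - f (b - s)) ^ (n⁻¹ : ℝ)) :=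
    (hconv.comp_const_sub b).subset hmem (convex_Icc _ _)
  refine (hh.pow_comp_rpow_inv_natCast (sub_nonneg.2 hab) (by simp [hn])
    (fun s hs => Real.rpow_nonneg (hnonneg s hs) _) hn).congr fun t ht => ?_
  exact Real.rpow_inv_natCast_pow
    (hnonneg _ (rpow_inv_natCast_mem_Icc (sub_nonneg.2 hab) hn ht)) hn

theorem ContinuousOn.integrable_of_ae_mem {X E : Type*} [TopologicalSpace X] [T2Space X]
    [MeasurableSpace X] [OpensMeasurableSpace X] [NormedAddCommGroup E] {μ : Measure X}
    [IsFiniteMeasure μ] {K : Set X} (hK : IsCompact K) {g : X → E} (hg : ContinuousOn g K)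
    (hae : ∀ᵐ x ∂μ, x ∈ K) : Integrable g μ := by
  simpa [IntegrableOn, Measure.restrict_eq_self_of_ae_mem hae] using
    hg.integrableOn_compact (μ := μ) hK

theorem integral_le_rpow_inv_integral_pow {α : Type*} [MeasurableSpace α] {μ : Measure α}
    [IsProbabilityMeasure μ] {g : α → ℝ} (hg : ∀ᵐ x ∂μ, 0 ≤ g x) (hgi : Integrable g μ)
    {n : ℕ} (hn : n ≠ 0) (hgni : Integrable (fun x => g x ^ n) μ) :
    ∫ x, g x ∂μ ≤ (∫ x, g x ^ n ∂μ) ^ (n⁻¹ : ℝ) := by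
  have hmean : 0 ≤ ∫ x, g x ∂μ := integral_nonneg_of_ae hg
  have hjensen : (∫ x, g x ∂μ) ^ n ≤ ∫ x, g x ^ n ∂μ :=
    (convexOn_pow n).map_integral_le (continuous_pow n).continuousOn isClosed_Ici hg hgi hgni
  calc ∫ x, g x ∂μ = ((∫ x, g x ∂μ) ^ n) ^ (n⁻¹ : ℝ) :=
        (Real.pow_rpow_inv_natCast hmean hn).symm
    _ ≤ (∫ x, g x ^ n ∂μ) ^ (n⁻¹ : ℝ) :=
        Real.rpow_le_rpow (pow_nonneg hmean n) hjensen (by positivity)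

theorem sub_pow_mem_Icc {a b x : ℝ} (n : ℕ) (hx : x ∈ Icc a b) :
    (b - x) ^ n ∈ Icc 0 ((b - a) ^ n) :=
  ⟨pow_nonneg (sub_nonneg.2 hx.2) n,
    pow_le_pow_left₀ (sub_nonneg.2 hx.2) (sub_le_sub_left hx.1 b) n⟩

theorem integral_le_apply_sub_rpow_inv_integral_pow {μ : Measure ℝ} [IsProbabilityMeasure μ]
    {a b : ℝ} (hae : ∀ᵐ x ∂μ, x ∈ Icc a b) {f : ℝ → ℝ} (hf : Continuous f) {n : ℕ}
    (hn : n ≠ 0)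
    (hψ : ConvexOn ℝ (Icc 0 ((b - a) ^ n)) (fun t => f b - f (b - t ^ (n⁻¹ : ℝ)))) :
    ∫ x, f x ∂μ ≤ f (b - (∫ x, (b - x) ^ n ∂μ) ^ (n⁻¹ : ℝ)) := by
  have hint (g : ℝ → ℝ) (hg : Continuous g) : Integrable g μ :=
    hg.continuousOn.integrable_of_ae_mem isCompact_Icc hae
  have hψc : Continuous fun t : ℝ => f b - f (b - t ^ (n⁻¹ : ℝ)) :=
    continuous_const.sub <|
      hf.comp (continuous_const.sub (Real.continuous_rpow_const (by positivity)))
  have hjensen := hψ.map_integral_le hψc.continuousOn isClosed_Icc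
    (hae.mono fun _ => sub_pow_mem_Icc n) (hint _ (by fun_prop))
    (hint _ (hψc.comp (by fun_prop)))
  have hcancel : ∀ᵐ x ∂μ, f b - f (b - ((b - x) ^ n) ^ (n⁻¹ : ℝ)) = f b - f x :=
    hae.mono fun x hx => by rw [Real.pow_rpow_inv_natCast (sub_nonneg.2 hx.2) hn, sub_sub_cancel]
  rw [integral_congr_ae hcancel, integral_sub (integrable_const _) (hint f hf)] at hjensen
  simp only [integral_const, probReal_univ, smul_eq_mul, one_mul] at hjensen
  linarith

theorem sub_rpow_inv_integral_pow_le_integral {μ : Measure ℝ} [IsProbabilityMeasure μ]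
    {a b : ℝ} (hae : ∀ᵐ x ∂μ, x ∈ Icc a b) {n : ℕ} (hn : n ≠ 0) :
    b - (∫ x, (b - x) ^ n ∂μ) ^ (n⁻¹ : ℝ) ≤ ∫ x, x ∂μ := by
  have hint (g : ℝ → ℝ) (hg : Continuous g) : Integrable g μ :=
    hg.continuousOn.integrable_of_ae_mem isCompact_Icc hae
  have := integral_le_rpow_inv_integral_pow (g := fun x => b - x)
    (hae.mono fun x hx => sub_nonneg.2 hx.2) (hint _ (by fun_prop)) hn (hint _ (by fun_prop))
  rw [integral_sub (integrable_const b) (hint _ continuous_id')] at this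
  simp only [integral_const, probReal_univ, smul_eq_mul, one_mul] at this
  linarith

theorem stmt_8 (n : ℕ) (a b : ℝ) (f : ℝ → ℝ)
    (hn : 1 ≤ n) (hab : a < b)
    (hf : ContDiff ℝ n f)
    (hsign : ∀ k, 1 ≤ k → k ≤ n → ∀ x ∈ Set.Icc a b,
      (-1 : ℝ) ^ k * iteratedDeriv k f x ≤ 0)
    (hconv : ConvexOn ℝ (Set.Icc a b) (fun x => (f b - f x) ^ ((1 : ℝ) / n)))
    (μ : Measure ℝ) [IsProbabilityMeasure μ]
    (hμ : μ (Set.Icc a b) = 1) :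
    (∫ x, f x ∂μ) ≤ f (b - (∫ x, (b - x) ^ n ∂μ) ^ ((1 : ℝ) / n)) ∧
      f (b - (∫ x, (b - x) ^ n ∂μ) ^ ((1 : ℝ) / n)) ≤ f (∫ x, x ∂μ) := by
  have hn₀ : n ≠ 0 := by omega
  have hae : ∀ᵐ x ∂μ, x ∈ Icc a b :=
    (ae_mem_iff_measure_eq measurableSet_Icc.nullMeasurableSet).2 (by rw [hμ, measure_univ])
  have hmono : MonotoneOn f (Icc a b) := by
    refine monotoneOn_of_deriv_nonneg (convex_Icc a b) hf.continuous.continuousOn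
      (hf.differentiable (by exact_mod_cast hn₀)).differentiableOn fun x hx => ?_
    simpa using hsign 1 le_rfl hn x (interior_subset hx)
  have hψ := convexOn_sub_comp_sub_rpow_inv_natCast hab.le hn₀
    (fun x hx => hmono hx (right_mem_Icc.2 hab.le) hx.2) (by simpa only [one_div] using hconv)
  have hm : (∫ x, (b - x) ^ n ∂μ) ^ (n⁻¹ : ℝ) ∈ Icc 0 (b - a) := by
    refine rpow_inv_natCast_mem_Icc (sub_nonneg.2 hab.le) hn₀
      ((convex_Icc _ _).integral_mem isClosed_Icc (hae.mono fun _ => sub_pow_mem_Icc n) ?_)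
    exact (by fun_prop : Continuous fun x : ℝ => (b - x) ^ n).continuousOn.integrable_of_ae_mem
      isCompact_Icc hae
  simp only [one_div]
  refine ⟨integral_le_apply_sub_rpow_inv_integral_pow hae hf.continuous hn₀ hψ,
    hmono ⟨by linarith [hm.2], by linarith [hm.1]⟩
      ((convex_Icc a b).integral_mem isClosed_Icc hae ?_)
      (sub_rpow_inv_integral_pow_le_integral hae hn₀)⟩
  exact continuous_id.continuousOn.integrable_of_ae_mem isCompact_Icc hae
end

section
/- Let F and G be distribution functions on [a,b] and let n ≥ 1. Suppose ∫_a^b max{c-x,0}^n dF(x) ≥ ∫_a^b max{c-x,0}^n dG(x) for all c in [a,b]. Then for every u ∈ C^{n+1}([a,b]) with (-1)^k u^(k) ≤ 0 on [a,b] for k = 1,…,n+1 and u^(k)(b) = 0 for k = 1,…,n-1, we have ∫_a^b u dF ≤ ∫_a^b u dG. -/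
/-!
Taylor's formula at `b` with integral remainder, in which the derivatives of orders `1, …, n - 1`
vanish, writes every `x ∈ [a, b]` as
`u x = u b + α (b - x)₊ⁿ + ∫ t in a..b, β t (t - x)₊ⁿ`
with `α = (-1)ⁿ u⁽ⁿ⁾(b) / n!` and `β t = (-1)ⁿ⁺¹ u⁽ⁿ⁺¹⁾(t) / n!`. Integrating against a measure on
`[a, b]` and swapping the integrals (Fubini) expresses `∫ u dμ` through the lower partial moments
`c ↦ ∫ (c - x)₊ⁿ dμ`. The sign conditions on `u` make `α` and `β` nonpositive, so the domination
hypothesis on these moments transfers to the expectations of `u`.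
-/

open MeasureTheory Set intervalIntegral
open scoped Nat

section Taylor

variable {E : Type*} [NormedAddCommGroup E] [NormedSpace ℝ E] {f : ℝ → E} {n : ℕ}

theorem ContDiff.taylor_integral_remainder_univ [CompleteSpace E] (hf : ContDiff ℝ (n + 1) f)
    (x₀ x : ℝ) :
    f x - taylorWithinEval f n univ x₀ x =
      ∫ t in x₀..x, ((x - t) ^ n / n !) • iteratedDeriv (n + 1) f t := by
  rcases eq_or_ne x₀ x with rfl | hne
  · simp
  have hU : UniqueDiffOn ℝ (uIcc x₀ x) := uniqueDiffOn_uIcc hne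
  have hderiv : ∀ k ≤ n + 1,
      EqOn (iteratedDerivWithin k f (uIcc x₀ x)) (iteratedDeriv k f) (uIcc x₀ x) :=
    fun k hk t ht => iteratedDerivWithin_eq_iteratedDeriv hU
      (hf.contDiffAt.of_le (by exact_mod_cast hk)) ht
  have htaylor : taylorWithinEval f n (uIcc x₀ x) x₀ x = taylorWithinEval f n univ x₀ x := by
    simp only [taylor_within_apply, iteratedDerivWithin_univ]
    refine Finset.sum_congr rfl fun k hk => ?_
    rw [hderiv k (by simp at hk; omega) left_mem_uIcc]
  rw [← htaylor, taylor_integral_remainder (by exact_mod_cast hf.contDiffOn)]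
  exact integral_congr fun t ht => by simp only [hderiv (n + 1) le_rfl ht]

theorem taylorWithinEval_univ_of_iteratedDeriv_eq_zero_s13 {x₀ : ℝ} (hn : n ≠ 0)
    (h : ∀ k, 0 < k → k < n → iteratedDeriv k f x₀ = 0) (x : ℝ) :
    taylorWithinEval f n univ x₀ x = f x₀ + ((x - x₀) ^ n / n !) • iteratedDeriv n f x₀ := by
  rw [taylor_within_apply, Finset.sum_range_succ, Finset.sum_eq_single 0]
  · simp [div_eq_inv_mul]
  · intro k hk hk0
    rw [iteratedDerivWithin_univ, h k (Nat.pos_of_ne_zero hk0) (Finset.mem_range.1 hk), smul_zero]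
  · simp [Nat.pos_of_ne_zero hn]

end Taylor

theorem integral_mul_max_sub_pow {n : ℕ} (hn : n ≠ 0) {a b x : ℝ} (hx : x ∈ Icc a b)
    (g : ℝ → ℝ) :
    ∫ t in a..b, g t * max (t - x) 0 ^ n = ∫ t in x..b, g t * (t - x) ^ n := by
  rw [integral_of_le (hx.1.trans hx.2), integral_of_le hx.2,
    setIntegral_eq_of_subset_of_forall_sdiff_eq_zero measurableSet_Ioc
      (Ioc_subset_Ioc_left hx.1)]
  · refine setIntegral_congr_fun measurableSet_Ioc fun t ht => ?_
    rw [max_eq_left (sub_nonneg.2 ht.1.le)]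
  · intro t ht
    rw [max_eq_right (sub_nonpos.2 (not_lt.1 fun h => ht.2 ⟨h, ht.1.2⟩)), zero_pow hn, mul_zero]

theorem eq_add_integral_max_pow_of_iteratedDeriv_eq_zero {n : ℕ} (hn : n ≠ 0) {u : ℝ → ℝ}
    (hu : ContDiff ℝ (n + 1) u) {a b x : ℝ} (hb : ∀ k, 0 < k → k < n → iteratedDeriv k u b = 0)
    (hx : x ∈ Icc a b) :
    u x = u b + (-1) ^ n * iteratedDeriv n u b / n ! * max (b - x) 0 ^ n
      + ∫ t in a..b, (-1) ^ (n + 1) * iteratedDeriv (n + 1) u t / n ! * max (t - x) 0 ^ n := by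
  have hflip : ∀ t, (x - t) ^ n = (-1) ^ n * (t - x) ^ n := fun t => by
    rw [← neg_sub, neg_pow]
  have htaylor := hu.taylor_integral_remainder_univ b x
  rw [taylorWithinEval_univ_of_iteratedDeriv_eq_zero_s13 hn hb, sub_eq_iff_eq_add'] at htaylor
  rw [integral_mul_max_sub_pow hn hx, max_eq_left (sub_nonneg.2 hx.2), htaylor,
    integral_symm b x, ← intervalIntegral.integral_neg, smul_eq_mul, hflip]
  congr 1
  · ring
  · refine integral_congr fun t _ => ?_
    simp only [smul_eq_mul, hflip]
    ring

/-- `lowerPartialMoment μ n c = ∫ (c - x)₊ⁿ dμ` is `n!` times the `(n + 1)`-st iterated integral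
`F⁽ⁿ⁺¹⁾(c)` of the distribution function `F` of `μ`. -/
noncomputable def lowerPartialMoment (μ : Measure ℝ) (n : ℕ) (c : ℝ) : ℝ :=
  ∫ x, max (c - x) 0 ^ n ∂μ

theorem Continuous.integrable_of_ae_mem_compact {X E : Type*} [TopologicalSpace X]
    [MeasurableSpace X] [OpensMeasurableSpace X] [T2Space X] [NormedAddCommGroup E]
    {ρ : Measure X} [IsFiniteMeasure ρ] {K : Set X} {g : X → E} (hg : Continuous g)
    (hK : IsCompact K) (hρ : ∀ᵐ x ∂ρ, x ∈ K) : Integrable g ρ := by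
  rw [← Measure.restrict_eq_self_of_ae_mem hρ]
  exact hg.continuousOn.integrableOn_compact hK

section CompactlySupported

variable {μ : Measure ℝ} {s : Set ℝ}

theorem continuous_lowerPartialMoment [IsLocallyFiniteMeasure μ] (hs : IsCompact s)
    (hμ : ∀ᵐ x ∂μ, x ∈ s) (n : ℕ) : Continuous (lowerPartialMoment μ n) := by
  have : lowerPartialMoment μ n = fun c => ∫ x in s, max (c - x) 0 ^ n ∂μ := by
    funext c
    rw [lowerPartialMoment, Measure.restrict_eq_self_of_ae_mem hμ]
  rw [this]
  exact continuous_parametric_integral_of_continuous (by fun_prop) hs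

theorem integral_intervalIntegral_swap_of_ae_mem_compact {E : Type*} [NormedAddCommGroup E]
    [NormedSpace ℝ E] [IsFiniteMeasure μ] {f : ℝ → ℝ → E} (hf : Continuous f.uncurry)
    (hs : IsCompact s) (hμ : ∀ᵐ x ∂μ, x ∈ s) {a b : ℝ} (hab : a ≤ b) :
    ∫ x, (∫ t in a..b, f x t) ∂μ = ∫ t in a..b, ∫ x, f x t ∂μ := by
  simp only [integral_of_le hab]
  rw [← Measure.restrict_eq_self_of_ae_mem hμ]
  refine integral_integral_swap ?_
  rw [Measure.prod_restrict]
  exact (hf.continuousOn.integrableOn_compact (hs.prod isCompact_Icc)).mono_set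
    (prod_mono subset_rfl Ioc_subset_Icc_self)

end CompactlySupported

theorem integral_eq_add_lowerPartialMoment {n : ℕ} (hn : n ≠ 0) {u : ℝ → ℝ}
    (hu : ContDiff ℝ (n + 1) u) {a b : ℝ} (hab : a ≤ b)
    (hb : ∀ k, 0 < k → k < n → iteratedDeriv k u b = 0) {μ : Measure ℝ} [IsProbabilityMeasure μ]
    (hμ : ∀ᵐ x ∂μ, x ∈ Icc a b) :
    ∫ x, u x ∂μ = u b + (-1) ^ n * iteratedDeriv n u b / n ! * lowerPartialMoment μ n b
      + ∫ t in a..b, (-1) ^ (n + 1) * iteratedDeriv (n + 1) u t / n ! * lowerPartialMoment μ n t := by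
  have hD : Continuous (iteratedDeriv (n + 1) u) := hu.continuous_iteratedDeriv (n + 1) le_rfl
  have hkernel : Continuous (Function.uncurry fun x t : ℝ =>
      (-1) ^ (n + 1) * iteratedDeriv (n + 1) u t / n ! * max (t - x) 0 ^ n) := by
    fun_prop
  have hint : ∀ g : ℝ → ℝ, Continuous g → Integrable g μ :=
    fun g hg => hg.integrable_of_ae_mem_compact isCompact_Icc hμ
  rw [integral_congr_ae (hμ.mono fun x hx =>
      eq_add_integral_max_pow_of_iteratedDeriv_eq_zero hn hu hb hx),
    integral_add (hint _ (by fun_prop))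
      (hint _ (continuous_parametric_intervalIntegral_of_continuous' hkernel a b)),
    integral_add (integrable_const _) (hint _ (by fun_prop)), MeasureTheory.integral_const,
    MeasureTheory.integral_const_mul,
    integral_intervalIntegral_swap_of_ae_mem_compact hkernel isCompact_Icc hμ hab]
  simp only [MeasureTheory.integral_const_mul, probReal_univ, one_smul, lowerPartialMoment]

theorem stmt_13 (n : ℕ) (a b : ℝ) (hn : 1 ≤ n) (hab : a < b)
    (μ ν : Measure ℝ) [IsProbabilityMeasure μ] [IsProbabilityMeasure ν]
    (hμ : μ (Set.Icc a b) = 1) (hν : ν (Set.Icc a b) = 1)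
    (hdom : ∀ c ∈ Set.Icc a b,
      (∫ x, max (c - x) 0 ^ n ∂ν) ≤ ∫ x, max (c - x) 0 ^ n ∂μ) :
    ∀ u : ℝ → ℝ, ContDiff ℝ (n + 1) u →
      (∀ k, 1 ≤ k → k ≤ n + 1 → ∀ x ∈ Set.Icc a b,
        (-1 : ℝ) ^ k * iteratedDeriv k u x ≤ 0) →
      (∀ k, 1 ≤ k → k ≤ n - 1 → iteratedDeriv k u b = 0) →
      (∫ x, u x ∂μ) ≤ ∫ x, u x ∂ν := by
  intro u hu hsign hder
  have hvanish : ∀ k, 0 < k → k < n → iteratedDeriv k u b = 0 :=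
    fun k hk hkn => hder k hk (by omega)
  have hμ' := (mem_ae_iff_prob_eq_one measurableSet_Icc).2 hμ
  have hν' := (mem_ae_iff_prob_eq_one measurableSet_Icc).2 hν
  rw [integral_eq_add_lowerPartialMoment (by omega) hu hab.le hvanish hμ',
    integral_eq_add_lowerPartialMoment (by omega) hu hab.le hvanish hν']
  have hcoeff : ∀ k, 1 ≤ k → k ≤ n + 1 → ∀ t ∈ Icc a b,
      (-1) ^ k * iteratedDeriv k u t / n ! ≤ 0 :=
    fun k hk hkn t ht => div_nonpos_of_nonpos_of_nonneg (hsign k hk hkn t ht) (by positivity)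
  have hb : b ∈ Icc a b := right_mem_Icc.2 hab.le
  have hD : Continuous (iteratedDeriv (n + 1) u) := hu.continuous_iteratedDeriv (n + 1) le_rfl
  have hLμ := continuous_lowerPartialMoment isCompact_Icc hμ' n
  have hLν := continuous_lowerPartialMoment isCompact_Icc hν' n
  refine add_le_add (add_le_add le_rfl ?_) ?_
  · exact mul_le_mul_of_nonpos_left (hdom b hb) (hcoeff n hn (by omega) b hb)
  · refine integral_mono_on hab.le ?_ ?_ fun t ht =>
      mul_le_mul_of_nonpos_left (hdom t ht) (hcoeff (n + 1) (by omega) le_rfl t ht)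
    all_goals exact Continuous.intervalIntegrable (by fun_prop) _ _
end

section
/- Let F and G be distribution functions on [a,b] and n ≥ 1. If ∫_a^b u dF ≤ ∫_a^b u dG for every u ∈ C^{n+1}([a,b]) with (-1)^k u^(k) ≤ 0 for k = 1,…,n+1 and u^(k)(b) = 0 for k = 1,…,n-1, then ∫_a^b max{c-x,0}^n dF(x) ≥ ∫_a^b max{c-x,0}^n dG(x) for all c in [a,b]. -/
/-!
Write φ(x) = max (c - x) 0 ^ n. It suffices to approximate -φ uniformly on
[a, b] by members of the generator class, because the hypothesis then passes to -φ in the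
limit. Up to the factor (-1)^(n+1) n!, the function -φ is the n-fold integral from b of the
indicator of (-∞, c). Integrating instead a smooth antitone step q, equal to 1 below c - ε and
to 0 above c, gives u = (-1)^(n+1) n! ∫_b ⋯ ∫_b q. For k ≤ n the k-th derivative of u is a
multiple of an iterated integral of q ≥ 0 with alternating sign, the (n+1)-th one is a positive
multiple of q' ≤ 0, and the derivatives of order 1, …, n-1 vanish at b because they are
integrals from b. After one integration the error is at most ε, and each further integration
over [a, b] multiplies it by at most b - a.
-/

open MeasureTheory Set Filter Topology intervalIntegral
open scoped ContDiff Nat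

theorem neg_one_pow_sq {R : Type*} [Monoid R] [HasDistribNeg R] (k : ℕ) :
    ((-1 : R) ^ k) ^ 2 = 1 := by
  rw [← pow_mul, mul_comm, pow_mul, neg_one_sq, one_pow]

noncomputable def iterIntegral (b : ℝ) (f : ℝ → ℝ) : ℕ → ℝ → ℝ
  | 0 => f
  | j + 1 => fun x => ∫ t in b..x, iterIntegral b f j t

section IterIntegral

variable {b : ℝ} {f g : ℝ → ℝ}

theorem continuous_iterIntegral (hf : Continuous f) : ∀ j, Continuous (iterIntegral b f j)
  | 0 => hf
  | j + 1 => continuous_iff_continuousAt.2 fun x =>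
      ((continuous_iterIntegral hf j).integral_hasStrictDerivAt b x).hasDerivAt.continuousAt

theorem hasDerivAt_iterIntegral_succ (hf : Continuous f) (j : ℕ) (x : ℝ) :
    HasDerivAt (iterIntegral b f (j + 1)) (iterIntegral b f j x) x :=
  ((continuous_iterIntegral hf j).integral_hasStrictDerivAt b x).hasDerivAt

theorem deriv_iterIntegral_succ (hf : Continuous f) (j : ℕ) :
    deriv (iterIntegral b f (j + 1)) = iterIntegral b f j :=
  funext fun x => (hasDerivAt_iterIntegral_succ hf j x).deriv

theorem iteratedDeriv_iterIntegral (hf : Continuous f) {k j : ℕ} (hkj : k ≤ j) :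
    iteratedDeriv k (iterIntegral b f j) = iterIntegral b f (j - k) := by
  induction k with
  | zero => rfl
  | succ k ih =>
    rw [iteratedDeriv_succ, ih (by omega), show j - k = j - (k + 1) + 1 by omega,
      deriv_iterIntegral_succ hf]

theorem contDiff_iterIntegral (hf : ContDiff ℝ ∞ f) :
    ∀ j, ContDiff ℝ ∞ (iterIntegral b f j)
  | 0 => hf
  | j + 1 => contDiff_infty_iff_deriv.2
      ⟨fun x => (hasDerivAt_iterIntegral_succ hf.continuous j x).differentiableAt,
        by rw [deriv_iterIntegral_succ hf.continuous]; exact contDiff_iterIntegral hf j⟩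

theorem iterIntegral_succ_self (f : ℝ → ℝ) (j : ℕ) : iterIntegral b f (j + 1) b = 0 :=
  integral_same

theorem iterIntegral_iterIntegral (f : ℝ → ℝ) (i : ℕ) :
    ∀ j, iterIntegral b (iterIntegral b f i) j = iterIntegral b f (i + j)
  | 0 => rfl
  | j + 1 => by
    funext x
    exact congrArg (fun F => ∫ t in b..x, F t) (iterIntegral_iterIntegral f i j)

theorem iterIntegral_sub (hf : Continuous f) (hg : Continuous g) :
    ∀ j, iterIntegral b (f - g) j = iterIntegral b f j - iterIntegral b g j
  | 0 => rfl
  | j + 1 => by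
    funext x
    simp only [iterIntegral, Pi.sub_apply, iterIntegral_sub hf hg j]
    exact integral_sub ((continuous_iterIntegral hf j).intervalIntegrable _ _)
      ((continuous_iterIntegral hg j).intervalIntegrable _ _)

theorem neg_one_pow_mul_iterIntegral_nonneg (hf : ∀ x ≤ b, 0 ≤ f x) :
    ∀ j, ∀ x ≤ b, 0 ≤ (-1) ^ j * iterIntegral b f j x
  | 0, x, hx => by simpa [iterIntegral] using hf x hx
  | j + 1, x, hx => by
    have key : (-1) ^ (j + 1) * iterIntegral b f (j + 1) x
        = ∫ t in x..b, (-1) ^ j * iterIntegral b f j t := by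
      rw [intervalIntegral.integral_const_mul, iterIntegral, integral_symm]
      ring
    rw [key]
    exact integral_nonneg hx fun t ht =>
      neg_one_pow_mul_iterIntegral_nonneg hf j t ht.2

theorem abs_iterIntegral_le {a E : ℝ} (hf : ∀ x ∈ Icc a b, |f x| ≤ E) :
    ∀ j, ∀ x ∈ Icc a b, |iterIntegral b f j x| ≤ E * (b - a) ^ j
  | 0, x, hx => by simpa [iterIntegral] using hf x hx
  | j + 1, x, hx => by
    have hE : 0 ≤ E * (b - a) ^ j :=
      (abs_nonneg _).trans (abs_iterIntegral_le hf j x hx)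
    have hsub : uIoc b x ⊆ Icc a b := by
      rw [uIoc_of_ge hx.2]
      exact Ioc_subset_Icc_self.trans (Icc_subset_Icc_left hx.1)
    calc |iterIntegral b f (j + 1) x|
        ≤ E * (b - a) ^ j * |x - b| :=
          norm_integral_le_of_norm_le_const (f := iterIntegral b f j) fun t ht =>
            abs_iterIntegral_le hf j t (hsub ht)
      _ ≤ E * (b - a) ^ j * (b - a) := by
          gcongr
          rw [abs_sub_comm, abs_of_nonneg (by linarith [hx.2])]
          linarith [hx.1]
      _ = E * (b - a) ^ (j + 1) := by ring

end IterIntegral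

theorem hasDerivAt_max_sub_pow (c x : ℝ) (k : ℕ) :
    HasDerivAt (fun y => max (c - y) 0 ^ (k + 2))
      (-((k : ℝ) + 2) * max (c - x) 0 ^ (k + 1)) x := by
  have off : ∀ y ≠ c, HasDerivAt (fun y => max (c - y) 0 ^ (k + 2))
      (-((k : ℝ) + 2) * max (c - y) 0 ^ (k + 1)) y := by
    intro y hy
    rcases hy.lt_or_gt with hyc | hcy
    · have heq : (fun y => max (c - y) 0 ^ (k + 2)) =ᶠ[𝓝 y] fun y => (c - y) ^ (k + 2) := by
        filter_upwards [Iio_mem_nhds hyc] with z hz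
        rw [max_eq_left (sub_nonneg.2 (le_of_lt hz))]
      refine ((((hasDerivAt_id y).const_sub c).pow (k + 2)).congr_of_eventuallyEq heq
        ).congr_deriv ?_
      rw [max_eq_left (sub_nonneg.2 hyc.le)]
      simp only [id]
      push_cast
      ring
    · have heq : (fun y => max (c - y) 0 ^ (k + 2)) =ᶠ[𝓝 y] fun _ => 0 := by
        filter_upwards [Ioi_mem_nhds hcy] with z hz
        rw [max_eq_right (by linarith [mem_Ioi.1 hz]), zero_pow (by omega)]
      refine ((hasDerivAt_const y 0).congr_of_eventuallyEq heq).congr_deriv ?_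
      rw [max_eq_right (by linarith), zero_pow (by omega), mul_zero]
  rcases eq_or_ne x c with rfl | hxc
  · exact hasDerivAt_of_hasDerivAt_of_ne off (by fun_prop) (by fun_prop)
  · exact off x hxc

theorem iterIntegral_neg_max_sub {b c : ℝ} (hcb : c ≤ b) :
    ∀ j, iterIntegral b (fun x => -max (c - x) 0) j
      = fun x => (-1) ^ (j + 1) / (j + 1)! * max (c - x) 0 ^ (j + 1)
  | 0 => by funext x; simp [iterIntegral]
  | j + 1 => by
    funext x
    have hderiv : ∀ y, HasDerivAt (fun y => (-1) ^ (j + 2) / (j + 2)! * max (c - y) 0 ^ (j + 2))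
        ((-1) ^ (j + 1) / (j + 1)! * max (c - y) 0 ^ (j + 1)) y := by
      intro y
      refine ((hasDerivAt_max_sub_pow c y j).const_mul _).congr_deriv ?_
      rw [Nat.factorial_succ (j + 1)]
      push_cast
      field_simp
      ring
    rw [iterIntegral, iterIntegral_neg_max_sub hcb j]
    dsimp only
    rw [integral_eq_sub_of_hasDerivAt (fun y _ => hderiv y)
      (Continuous.intervalIntegrable (by fun_prop) _ _),
      max_eq_right (sub_nonpos.2 hcb)]
    simp

theorem abs_integral_sub_max_sub_le {q : ℝ → ℝ} {b c ε : ℝ} (hq : Continuous q)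
    (hq0 : ∀ t, 0 ≤ q t) (hq1 : ∀ t, q t ≤ 1) (hqc : ∀ t, c ≤ t → q t = 0)
    (hqε : ∀ t, t ≤ c - ε → q t = 1) (hε : 0 ≤ ε) (hcb : c ≤ b) {x : ℝ}
    (hxb : x ≤ b) :
    |(∫ t in x..b, q t) - max (c - x) 0| ≤ ε := by
  have hint : ∀ y z, IntervalIntegrable q volume y z := hq.intervalIntegrable
  have htail : ∀ y, c ≤ y → ∫ t in y..b, q t = 0 := fun y hy => by
    rw [integral_congr (g := fun _ => 0) fun t ht => hqc t ((le_min hy hcb).trans ht.1)]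
    simp
  have upper : ∫ t in x..b, q t ≤ max (c - x) 0 := by
    rw [← integral_add_adjacent_intervals (hint x (max x c)) (hint _ b),
      htail _ (le_max_right x c), add_zero]
    calc ∫ t in x..max x c, q t ≤ ∫ _ in x..max x c, (1 : ℝ) :=
          integral_mono_on (le_max_left x c) (hint _ _) intervalIntegrable_const
            fun t _ => hq1 t
      _ = max (c - x) 0 := by
          rw [intervalIntegral.integral_const, smul_eq_mul, mul_one, ← max_sub_sub_right,
            sub_self, max_comm]
  have lower : max (c - x) 0 - ε ≤ ∫ t in x..b, q t := by
    rcases le_or_gt x (c - ε) with hx | hx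
    · rw [← integral_add_adjacent_intervals (hint x (c - ε)) (hint _ b),
        integral_congr (g := fun _ => 1) fun t ht => hqε t (ht.2.trans (max_le hx le_rfl)),
        max_eq_left (by linarith)]
      have : 0 ≤ ∫ t in c - ε..b, q t := integral_nonneg (by linarith) fun t _ => hq0 t
      simp only [intervalIntegral.integral_const, smul_eq_mul, mul_one]
      linarith
    · have : 0 ≤ ∫ t in x..b, q t := integral_nonneg hxb fun t _ => hq0 t
      have : max (c - x) 0 ≤ ε := max_le (by linarith) hε
      linarith
  exact abs_le.2 ⟨by linarith, by linarith⟩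

noncomputable def smoothStep (c ε t : ℝ) : ℝ :=
  Real.smoothTransition ((c - t) / ε)

section SmoothStep

variable {c ε : ℝ}

theorem contDiff_smoothStep : ContDiff ℝ ∞ (smoothStep c ε) :=
  Real.smoothTransition.contDiff.comp ((contDiff_const.sub contDiff_id).div_const ε)

theorem smoothStep_nonneg (t : ℝ) : 0 ≤ smoothStep c ε t :=
  Real.smoothTransition.nonneg _

theorem smoothStep_le_one (t : ℝ) : smoothStep c ε t ≤ 1 :=
  Real.smoothTransition.le_one _

theorem smoothStep_of_le (hε : 0 ≤ ε) {t : ℝ} (ht : c ≤ t) : smoothStep c ε t = 0 :=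
  Real.smoothTransition.zero_of_nonpos (div_nonpos_of_nonpos_of_nonneg (by linarith) hε)

theorem smoothStep_of_le_sub (hε : 0 < ε) {t : ℝ} (ht : t ≤ c - ε) : smoothStep c ε t = 1 :=
  Real.smoothTransition.one_of_one_le ((one_le_div hε).2 (by linarith))

theorem antitone_smoothStep (hε : 0 ≤ ε) : Antitone (smoothStep c ε) := fun _ _ hst =>
  Real.smoothTransition.monotone (div_le_div_of_nonneg_right (by linarith) hε)

end SmoothStep

def generatorClass (n : ℕ) (a b : ℝ) : Set (ℝ → ℝ) :=
  {u | ContDiff ℝ (n + 1) u ∧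
    (∀ k, 1 ≤ k → k ≤ n + 1 → ∀ x ∈ Icc a b,
      (-1 : ℝ) ^ k * iteratedDeriv k u x ≤ 0) ∧
    (∀ k, 1 ≤ k → k ≤ n - 1 → iteratedDeriv k u b = 0)}

noncomputable def generatorApprox (n : ℕ) (b c ε : ℝ) : ℝ → ℝ :=
  fun x => (-1) ^ (n + 1) * n ! * iterIntegral b (smoothStep c ε) n x

theorem generatorApprox_mem_generatorClass (n : ℕ) (a b c : ℝ) {ε : ℝ} (hε : 0 ≤ ε) :
    generatorApprox n b c ε ∈ generatorClass n a b := by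
  have hq : ContDiff ℝ ∞ (smoothStep c ε) := contDiff_smoothStep
  have hderiv : ∀ k ≤ n, ∀ x, iteratedDeriv k (generatorApprox n b c ε) x
      = (-1) ^ (n + 1) * n ! * iterIntegral b (smoothStep c ε) (n - k) x := fun k hk x => by
    unfold generatorApprox
    rw [iteratedDeriv_const_mul_field, iteratedDeriv_iterIntegral hq.continuous hk]
  refine ⟨(contDiff_const.mul (contDiff_iterIntegral hq n)).of_le (by exact_mod_cast le_top),
    fun k hk1 hk2 x hx => ?_, fun k hk1 hk2 => ?_⟩
  · rcases (show k ≤ n ∨ k = n + 1 by omega) with hkn | rfl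
    · obtain ⟨j, rfl⟩ := Nat.exists_eq_add_of_le' hkn
      rw [hderiv k hkn, Nat.add_sub_cancel]
      have hI := neg_one_pow_mul_iterIntegral_nonneg (f := smoothStep c ε)
        (fun t _ => smoothStep_nonneg t) j x hx.2
      set I := iterIntegral b (smoothStep c ε) j x
      calc (-1) ^ k * ((-1) ^ (j + k + 1) * ((j + k)! : ℝ) * I)
          = -((j + k)! * ((-1) ^ j * I)) := by
            linear_combination (-((j + k)! * (-1) ^ j * I)) * neg_one_pow_sq (R := ℝ) k
        _ ≤ 0 := neg_nonpos.2 (mul_nonneg (by positivity) hI)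
    · unfold generatorApprox
      rw [iteratedDeriv_const_mul_field, iteratedDeriv_succ,
        iteratedDeriv_iterIntegral hq.continuous le_rfl, Nat.sub_self]
      have hq' := (antitone_smoothStep (c := c) hε).deriv_nonpos (x := x)
      calc (-1) ^ (n + 1) * ((-1) ^ (n + 1) * (n ! : ℝ) * deriv (smoothStep c ε) x)
          = n ! * deriv (smoothStep c ε) x := by
            linear_combination (n ! * deriv (smoothStep c ε) x) * neg_one_pow_sq (R := ℝ) (n + 1)
        _ ≤ 0 := mul_nonpos_of_nonneg_of_nonpos (by positivity) hq'
  · rw [hderiv k (by omega), show n - k = n - k - 1 + 1 by omega, iterIntegral_succ_self,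
      mul_zero]

theorem abs_generatorApprox_add_le {a b c ε : ℝ} (hε : 0 < ε) (hcb : c ≤ b) (m : ℕ)
    {x : ℝ} (hx : x ∈ Icc a b) :
    |generatorApprox (m + 1) b c ε x + max (c - x) 0 ^ (m + 1)|
      ≤ (m + 1)! * (b - a) ^ m * ε := by
  set q := smoothStep c ε
  have hq : Continuous (iterIntegral b q 1) :=
    continuous_iterIntegral contDiff_smoothStep.continuous 1
  have hg : Continuous fun x : ℝ => -max (c - x) 0 := by fun_prop
  have base : ∀ y ∈ Icc a b, |(iterIntegral b q 1 - fun x => -max (c - x) 0) y| ≤ ε := by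
    intro y hy
    have := abs_integral_sub_max_sub_le contDiff_smoothStep.continuous smoothStep_nonneg
      smoothStep_le_one (fun t => smoothStep_of_le hε.le) (fun t => smoothStep_of_le_sub hε)
      hε.le hcb hy.2
    show |(∫ t in b..y, q t) - -max (c - y) 0| ≤ ε
    rw [← abs_neg, integral_symm, neg_sub, sub_neg_eq_add, add_comm] at this
    rwa [sub_neg_eq_add]
  have key := abs_iterIntegral_le base m x hx
  rw [iterIntegral_sub hq hg, iterIntegral_iterIntegral, iterIntegral_neg_max_sub hcb,
    add_comm 1 m] at key
  set F : ℝ → ℝ := iterIntegral b q (m + 1) - fun x =>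
    (-1) ^ (m + 1) / (m + 1)! * max (c - x) 0 ^ (m + 1)
  calc |generatorApprox (m + 1) b c ε x + max (c - x) 0 ^ (m + 1)|
      = |(-1) ^ (m + 2) * (m + 1)! * F x| := by
        congr 1
        simp only [generatorApprox, F, Pi.sub_apply]
        field_simp
        linear_combination (-max (c - x) 0 ^ (m + 1)) * neg_one_pow_sq (R := ℝ) (m + 1)
    _ = (m + 1)! * |F x| := by simp [abs_mul]
    _ ≤ (m + 1)! * (ε * (b - a) ^ m) := by gcongr
    _ = (m + 1)! * (b - a) ^ m * ε := by ring

theorem exists_mem_generatorClass_abs_add_le {a b c : ℝ} (hab : a < b) (hcb : c ≤ b) (m : ℕ)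
    {δ : ℝ} (hδ : 0 < δ) : ∃ u ∈ generatorClass (m + 1) a b,
      ∀ x ∈ Icc a b, |u x + max (c - x) 0 ^ (m + 1)| ≤ δ := by
  have hK : 0 < ((m + 1)! : ℝ) * (b - a) ^ m := by
    have := sub_pos.2 hab
    positivity
  refine ⟨generatorApprox (m + 1) b c (δ / ((m + 1)! * (b - a) ^ m)),
    generatorApprox_mem_generatorClass _ a b c (by positivity), fun x hx => ?_⟩
  exact (abs_generatorApprox_add_le (by positivity) hcb m hx).trans_eq
    (mul_div_cancel₀ δ hK.ne')

section ProbabilityMeasure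

variable {α : Type*} [MeasurableSpace α] {μ : Measure α} [IsProbabilityMeasure μ] {s : Set α}

theorem ae_mem_of_measure_eq_one (hs : MeasurableSet s) (h : μ s = 1) : ∀ᵐ x ∂μ, x ∈ s :=
  mem_ae_iff.2 ((prob_compl_eq_zero_iff hs).2 h)

variable [TopologicalSpace α] [OpensMeasurableSpace α] [T2Space α]

theorem Continuous.integrable_of_measure_eq_one {f : α → ℝ} (hf : Continuous f)
    (hs : IsCompact s) (h : μ s = 1) : Integrable f μ := by
  rw [← Measure.restrict_eq_self_of_ae_mem (ae_mem_of_measure_eq_one hs.measurableSet h)]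
  exact hf.continuousOn.integrableOn_compact hs

theorem abs_integral_sub_integral_le {f g : α → ℝ} {δ : ℝ} (hf : Continuous f)
    (hg : Continuous g) (hs : IsCompact s) (h : μ s = 1) (hfg : ∀ x ∈ s, |f x - g x| ≤ δ) :
    |∫ x, f x ∂μ - ∫ x, g x ∂μ| ≤ δ := by
  rw [← integral_sub (hf.integrable_of_measure_eq_one hs h)
    (hg.integrable_of_measure_eq_one hs h)]
  simpa using norm_integral_le_of_norm_le_const (μ := μ) (f := fun x => f x - g x)
    ((ae_mem_of_measure_eq_one hs.measurableSet h).mono hfg)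

end ProbabilityMeasure

theorem stmt_14 (n : ℕ) (a b : ℝ) (hn : 1 ≤ n) (hab : a < b)
    (μ ν : Measure ℝ) [IsProbabilityMeasure μ] [IsProbabilityMeasure ν]
    (hμ : μ (Set.Icc a b) = 1) (hν : ν (Set.Icc a b) = 1)
    (hgen : ∀ u : ℝ → ℝ, ContDiff ℝ (n + 1) u →
      (∀ k, 1 ≤ k → k ≤ n + 1 → ∀ x ∈ Set.Icc a b,
        (-1 : ℝ) ^ k * iteratedDeriv k u x ≤ 0) →
      (∀ k, 1 ≤ k → k ≤ n - 1 → iteratedDeriv k u b = 0) →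
      (∫ x, u x ∂μ) ≤ ∫ x, u x ∂ν) :
    ∀ c ∈ Set.Icc a b,
      (∫ x, max (c - x) 0 ^ n ∂ν) ≤ ∫ x, max (c - x) 0 ^ n ∂μ := by
  obtain ⟨m, rfl⟩ : ∃ m, n = m + 1 := ⟨n - 1, by omega⟩
  intro c hc
  refine le_of_forall_pos_le_add fun δ hδ => ?_
  obtain ⟨u, hu, hφu⟩ := exists_mem_generatorClass_abs_add_le hab hc.2 m (half_pos hδ)
  have hcont : Continuous fun x => -max (c - x) 0 ^ (m + 1) := by fun_prop
  have hφu' : ∀ x ∈ Icc a b, |u x - -max (c - x) 0 ^ (m + 1)| ≤ δ / 2 := by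
    simpa only [sub_neg_eq_add] using hφu
  have hμu := abs_integral_sub_integral_le hu.1.continuous hcont isCompact_Icc hμ hφu'
  have hνu := abs_integral_sub_integral_le hu.1.continuous hcont isCompact_Icc hν hφu'
  rw [MeasureTheory.integral_neg] at hμu hνu
  have := hgen u hu.1 hu.2.1 hu.2.2
  linarith [abs_le.1 hμu, abs_le.1 hνu]
end
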